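/- arXiv:2211.14256 — 2 statements merged into one kernel-verified Lean document; each statement's English description precedes it below -/
import Mathlib

section
/- Let G, E ∈ ℝ with G ≠ 0 and E > 0, and define f(z) = 1 - (4G²/(1+G²)²)·sin²((E/2)·z) for z ∈ ℂ (with sin the complex sine). Then for every integer n, z_n = ((2n+1)π - i·ln(G²))/E satisfies f(z_n) = 0. -/
open Complex

/-- The zeros of the single-mode Loschmidt factor
`f(z) = 1 - (4G²/(1+G²)²)·sin²((E/2)z)`: for every integer `n`, the point
`z_n = ((2n+1)π - i·ln(G²))/E` satisfies `f(z_n) = 0`. -/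
theorem fisher_zeros_of_single_mode_factor (G E : ℝ) (hG : G ≠ 0) (hE : 0 < E)
    (f : ℂ → ℂ)
    (hf : ∀ z : ℂ, f z =
      1 - ((4 * (G : ℂ) ^ 2 / (1 + (G : ℂ) ^ 2) ^ 2)) * Complex.sin (((E : ℂ) / 2) * z) ^ 2)
    (n : ℤ) :
    f ((((2 * (n : ℂ) + 1) * (Real.pi : ℂ)) - Complex.I * (Real.log (G ^ 2) : ℂ)) / (E : ℂ))
      = 0 := by
  have hGc : (G : ℂ) ≠ 0 := by exact_mod_cast hG
  have hEc : (E : ℂ) ≠ 0 := by exact_mod_cast hE.ne'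
  have hG1 : (1 + (G : ℂ) ^ 2) ≠ 0 := by
    intro h
    have h' : (1 + G ^ 2 : ℝ) = 0 := by exact_mod_cast h
    nlinarith [sq_nonneg G]
  rw [hf]
  set L : ℝ := Real.log (G ^ 2) with hLdef
  have harg : ((E : ℂ) / 2) * ((((2 * (n : ℂ) + 1) * (Real.pi : ℂ)) - Complex.I * (L : ℂ)) / (E : ℂ))
      = ((2 * (n : ℂ) + 1) * (Real.pi : ℂ) - Complex.I * (L : ℂ)) / 2 := by
    field_simp
  rw [harg]
  set w : ℂ := ((2 * (n : ℂ) + 1) * (Real.pi : ℂ) - Complex.I * (L : ℂ)) / 2 with hwdef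
  have hexpL : Complex.exp (L : ℂ) = (G : ℂ) ^ 2 := by
    rw [← Complex.ofReal_exp]
    norm_cast
    exact Real.exp_log (by positivity)
  have hexpodd : Complex.exp ((2 * (n : ℂ) + 1) * (Real.pi : ℂ) * Complex.I) = -1 := by
    rw [show (2 * (n : ℂ) + 1) * (Real.pi : ℂ) * Complex.I
        = (n : ℂ) * (2 * (Real.pi : ℂ) * Complex.I) + (Real.pi : ℂ) * Complex.I by ring,
      Complex.exp_add, Complex.exp_int_mul_two_pi_mul_I, Complex.exp_pi_mul_I]
    ring
  have h2wI : 2 * (w * Complex.I) = (2 * (n : ℂ) + 1) * (Real.pi : ℂ) * Complex.I + (L : ℂ) := by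
    rw [hwdef]
    linear_combination (-(L : ℂ)) * Complex.I_sq
  have he2 : Complex.exp (w * Complex.I) ^ 2 = -(G : ℂ) ^ 2 := by
    rw [sq, ← Complex.exp_add, show w * Complex.I + w * Complex.I = 2 * (w * Complex.I) by ring,
      h2wI, Complex.exp_add, hexpodd, hexpL]
    ring
  have hm : Complex.exp (-(w * Complex.I)) * Complex.exp (w * Complex.I) = 1 := by
    rw [← Complex.exp_add]; simp
  have he0 : Complex.exp (w * Complex.I) ≠ 0 := Complex.exp_ne_zero _
  have hn2 : Complex.exp (-(w * Complex.I)) ^ 2 = -(1 / (G : ℂ) ^ 2) := by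
    have : Complex.exp (-(w * Complex.I)) = 1 / Complex.exp (w * Complex.I) := by
      field_simp [← hm]
      exact hm
    rw [this, div_pow, he2]
    field_simp
  have hsin : Complex.sin w ^ 2 = (1 + (G : ℂ) ^ 2) ^ 2 / (4 * (G : ℂ) ^ 2) := by
    have hexpand : Complex.sin w ^ 2
        = (Complex.exp (-(w * Complex.I)) ^ 2
            - 2 * (Complex.exp (-(w * Complex.I)) * Complex.exp (w * Complex.I))
            + Complex.exp (w * Complex.I) ^ 2) * Complex.I ^ 2 / 4 := by
      rw [Complex.sin]
      ring_nf
    rw [hexpand, hn2, hm, he2, Complex.I_sq]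
    field_simp
    ring
  rw [hsin]
  field_simp
  ring
end

section
/- Let E_1 > E_2 > … > E_n > 0 and G be the antisymmetric n×n matrix of a BCS state, and suppose the Loschmidt echo is L(t) = Π_{α<β} (1 - (4G_{αβ}²/(1+G_{αβ}²)²)·sin²((E_α+E_β)t/2)). If |G_{αβ}| < 1 for all pairs (α,β) with α<β, then L(t) > 0 for all real t (no real zeros, hence no dynamical quantum phase transition); if |G_{αβ}| = 1 for some pair, then L vanishes exactly at the real times t = (2n+1)π/(E_α+E_β), n ∈ ℤ, coming from that pair's factor. -/
open Real Finset

/-- Zeros of the Loschmidt echo `L(t) = Π_{α<β} (1 - (4G_{αβ}²/(1+G_{αβ}²)²)·sin²((E_α+E_β)t/2))`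
of a quadratic fermionic quench, for strictly decreasing positive energies `E_α` and an
antisymmetric real BCS matrix `G`. If `|G_{αβ}| < 1` for all pairs `α < β`, then `L(t) > 0`
for all real `t` (no dynamical quantum phase transition); and if `|G_{αβ}| = 1` for a pair
`α < β`, that pair's factor vanishes exactly at the real times `t = (2n+1)π/(E_α+E_β)`, `n ∈ ℤ`. -/
theorem loschmidt_echo_zeros (n : ℕ) (E : Fin n → ℝ) (hEpos : ∀ α, 0 < E α)
    (hEanti : StrictAnti E) (G : Fin n → Fin n → ℝ)
    (hGanti : ∀ α β, G α β = -G β α) (L : ℝ → ℝ)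
    (hL : ∀ t : ℝ, L t =
      ∏ p ∈ Finset.univ.filter (fun p : Fin n × Fin n => p.1 < p.2),
        (1 - (4 * (G p.1 p.2) ^ 2 / (1 + (G p.1 p.2) ^ 2) ^ 2) *
          Real.sin ((E p.1 + E p.2) * t / 2) ^ 2)) :
    ((∀ α β : Fin n, α < β → |G α β| < 1) → ∀ t : ℝ, 0 < L t) ∧
    (∀ α β : Fin n, α < β → |G α β| = 1 → ∀ t : ℝ,
      (1 - (4 * (G α β) ^ 2 / (1 + (G α β) ^ 2) ^ 2) *
          Real.sin ((E α + E β) * t / 2) ^ 2 = 0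
        ↔ ∃ k : ℤ, t = (2 * k + 1) * π / (E α + E β))) := by
  constructor
  · intro hG t
    rw [hL t]
    apply Finset.prod_pos
    intro p hp
    simp only [Finset.mem_filter] at hp
    have hg : |G p.1 p.2| < 1 := hG p.1 p.2 hp.2
    set g := G p.1 p.2
    have hg2 : g ^ 2 < 1 := by
      have := abs_nonneg g
      nlinarith [sq_abs g]
    have hden : (0:ℝ) < (1 + g ^ 2) ^ 2 := by positivity
    have hc : 4 * g ^ 2 / (1 + g ^ 2) ^ 2 < 1 := by
      rw [div_lt_one hden]; nlinarith
    have hcnn : 0 ≤ 4 * g ^ 2 / (1 + g ^ 2) ^ 2 := by positivity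
    have hs : Real.sin ((E p.1 + E p.2) * t / 2) ^ 2 ≤ 1 := by
      nlinarith [Real.neg_one_le_sin ((E p.1 + E p.2) * t / 2),
        Real.sin_le_one ((E p.1 + E p.2) * t / 2)]
    nlinarith [sq_nonneg (Real.sin ((E p.1 + E p.2) * t / 2))]
  · intro α β _ hG t
    have hg2 : G α β ^ 2 = 1 := by
      have := sq_abs (G α β); rw [hG] at this; linarith
    have hE : (0:ℝ) < E α + E β := by linarith [hEpos α, hEpos β]
    rw [hg2]
    have hcoef : (4 * (1:ℝ) / (1 + 1) ^ 2) = 1 := by norm_num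
    rw [hcoef, one_mul]
    have hcos : 1 - Real.sin ((E α + E β) * t / 2) ^ 2
        = Real.cos ((E α + E β) * t / 2) ^ 2 := by
      rw [Real.cos_sq']
    rw [hcos, sq_eq_zero_iff, Real.cos_eq_zero_iff]
    constructor
    · rintro ⟨k, hk⟩
      exact ⟨k, by field_simp at hk ⊢; linarith⟩
    · rintro ⟨k, hk⟩
      exact ⟨k, by rw [hk]; field_simp⟩
end
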